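/- Let G=(V,E) be a d-manifold with d odd. Then the curvature is identically zero: K(v)=0 for every vertex v. -/
import Mathlib


open scoped Classical

/-- A finite simple graph: a finite vertex set together with a symmetric, irreflexive
adjacency relation supported on the vertex set. -/
structure FGraph (V : Type) where
  verts : Finset V
  Adj : V → V → Prop
  symm : ∀ {a b}, Adj a b → Adj b a
  loopless : ∀ a, ¬ Adj a a
  mem_of_adj : ∀ {a b}, Adj a b → a ∈ verts

namespace FGraph

variable {V W : Type}

/-- The subgraph induced on the vertices satisfying `P`. -/
noncomputable def induce (G : FGraph V) (P : V → Prop) : FGraph V where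
  verts := G.verts.filter P
  Adj a b := G.Adj a b ∧ P a ∧ P b
  symm h := ⟨G.symm h.1, h.2.2, h.2.1⟩
  loopless a h := G.loopless a h.1
  mem_of_adj h := Finset.mem_filter.mpr ⟨G.mem_of_adj h.1, h.2.1⟩

/-- The unit sphere of a vertex: the subgraph induced on its neighbors. -/
noncomputable def unitSphere (G : FGraph V) (v : V) : FGraph V :=
  G.induce (fun w => G.Adj v w)

/-- The graph with the vertex `v` (and its edges) removed. -/
noncomputable def erase (G : FGraph V) (v : V) : FGraph V :=
  G.induce (fun w => w ≠ v)

/-- Inductive definition of contractibility: the one-point graph is contractible, and a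
graph is contractible if some vertex has a contractible unit sphere and contractible
complement. -/
inductive Contractible : FGraph V → Prop
  | single (G : FGraph V) (v : V) (h : G.verts = {v}) : Contractible G
  | step (G : FGraph V) (v : V) (hv : v ∈ G.verts)
      (h1 : Contractible (G.unitSphere v)) (h2 : Contractible (G.erase v)) :
      Contractible G

mutual
  /-- `G` is a `d`-sphere: the empty graph is the `(-1)`-sphere, and a `d`-manifold is a
  `d`-sphere if removing some vertex renders it contractible. -/
  inductive IsSphere : ℤ → FGraph V → Prop
    | empty (G : FGraph V) (h : G.verts = ∅) : IsSphere (-1) G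
    | punctured (d : ℤ) (G : FGraph V) (hm : IsManifold d G) (v : V) (hv : v ∈ G.verts)
        (hc : Contractible (G.erase v)) : IsSphere d G
  /-- For `d ≥ 0`, `G` is a `d`-manifold iff every unit sphere is a `(d-1)`-sphere. -/
  inductive IsManifold : ℤ → FGraph V → Prop
    | intro (d : ℤ) (hd : 0 ≤ d) (G : FGraph V)
        (h : ∀ v ∈ G.verts, IsSphere (d - 1) (G.unitSphere v)) : IsManifold d G
end

/-- A simplex of `G`: the vertex set of a complete subgraph. -/
def IsSimplex (G : FGraph V) (x : Finset V) : Prop :=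
  x.Nonempty ∧ ↑x ⊆ G.verts ∧ ∀ a ∈ x, ∀ b ∈ x, a ≠ b → G.Adj a b

/-- The Barycentric refinement: vertices are the simplices of `G`, two being adjacent iff
one is strictly contained in the other. -/
noncomputable def barycentric (G : FGraph V) : FGraph (Finset V) where
  verts := G.verts.powerset.filter (fun x => G.IsSimplex x)
  Adj x y := G.IsSimplex x ∧ G.IsSimplex y ∧ (x ⊂ y ∨ y ⊂ x)
  symm h := ⟨h.2.1, h.1, h.2.2.symm⟩
  loopless x h := by rcases h.2.2 with h' | h' <;> exact (ssubset_irrefl x h')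
  mem_of_adj h := Finset.mem_filter.mpr ⟨Finset.mem_powerset.mpr h.1.2.1, h.1⟩

/-- Number of simplices of `G` with exactly `j` vertices (so `numSimplices G (k+1)` is
the `f`-vector entry `f_k(G)`). -/
noncomputable def numSimplices (G : FGraph V) (j : ℕ) : ℕ :=
  (G.verts.powerset.filter (fun x => G.IsSimplex x ∧ x.card = j)).card

/-- Euler characteristic `χ(G) = Σ_{k ≥ 0} (-1)^k f_k(G)`, where `f_k` counts the
simplices with `k+1` vertices. -/
noncomputable def euler (G : FGraph V) : ℤ :=
  ∑ k ∈ Finset.range G.verts.card, (-1 : ℤ) ^ k * G.numSimplices (k + 1)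

/-- The level set `{f = c}`: the subgraph of the Barycentric refinement induced by the
simplices on which `f - c` changes sign. -/
noncomputable def levelSet (G : FGraph V) (f : V → ℝ) (c : ℝ) : FGraph (Finset V) :=
  G.barycentric.induce (fun x => (∃ a ∈ x, f a - c < 0) ∧ (∃ b ∈ x, 0 < f b - c))

/-- Graph isomorphism. -/
def Iso (G : FGraph V) (H : FGraph W) : Prop :=
  ∃ φ : V → W, Set.BijOn φ ↑G.verts ↑H.verts ∧
    ∀ a ∈ G.verts, ∀ b ∈ G.verts, (G.Adj a b ↔ H.Adj (φ a) (φ b))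

/-- Zykov join of two graphs: disjoint union plus all edges between the two parts. -/
noncomputable def join (G : FGraph V) (H : FGraph W) : FGraph (V ⊕ W) where
  verts := G.verts.disjSum H.verts
  Adj a b :=
    match a, b with
    | .inl a, .inl b => G.Adj a b
    | .inr a, .inr b => H.Adj a b
    | .inl a, .inr b => a ∈ G.verts ∧ b ∈ H.verts
    | .inr a, .inl b => b ∈ G.verts ∧ a ∈ H.verts
  symm {a b} h := by
    cases a <;> cases b <;> simp_all <;> first | exact G.symm h | exact H.symm h
  loopless a h := by
    cases a <;> simp_all <;> first | exact G.loopless _ h | exact H.loopless _ h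
  mem_of_adj {a b} h := by
    cases a <;> cases b <;> simp_all [Finset.mem_disjSum] <;>
      first | exact G.mem_of_adj h | exact H.mem_of_adj h

/-- Union of two graphs on the same vertex type. -/
noncomputable def union (G H : FGraph V) : FGraph V where
  verts := G.verts ∪ H.verts
  Adj a b := G.Adj a b ∨ H.Adj a b
  symm h := h.imp G.symm H.symm
  loopless a h := h.elim (G.loopless a) (H.loopless a)
  mem_of_adj h :=
    h.elim (fun h' => Finset.mem_union_left _ (G.mem_of_adj h'))
      (fun h' => Finset.mem_union_right _ (H.mem_of_adj h'))

/-- A `d`-ball: a graph of the form `S - v` for a `d`-sphere `S` and a vertex `v` of `S`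
(up to graph isomorphism). -/
def IsBall (d : ℤ) (H : FGraph W) : Prop :=
  ∃ (S : FGraph ℕ) (v : ℕ), IsSphere d S ∧ v ∈ S.verts ∧ Iso H (S.erase v)

/-- A `d`-manifold with boundary: every unit sphere is a `(d-1)`-sphere or a `(d-1)`-ball. -/
def IsManifoldWithBoundary (d : ℤ) (G : FGraph V) : Prop :=
  ∀ v ∈ G.verts, IsSphere (d - 1) (G.unitSphere v) ∨ IsBall (d - 1) (G.unitSphere v)

/-- The cyclic graph `C_n` on the vertex set `Fin n`. -/
def cycleGraph (n : ℕ) : FGraph (Fin n) where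
  verts := Finset.univ
  Adj a b := a ≠ b ∧ ((a.val + 1) % n = b.val ∨ (b.val + 1) % n = a.val)
  symm h := ⟨h.1.symm, h.2.symm⟩
  loopless a h := h.1 rfl
  mem_of_adj _ := Finset.mem_univ _

/-- `G` is a disjoint union of cyclic graphs `C_n` with `n ≥ 4`: the vertex set splits
into pairwise disjoint pieces, edges never cross between pieces, and each piece induces
a graph isomorphic to a `C_n` with `n ≥ 4`. -/
def IsDisjointUnionOfCycles (G : FGraph V) : Prop :=
  ∃ P : Finset (Finset V),
    (∀ S ∈ P, ↑S ⊆ G.verts) ∧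
    (∀ S ∈ P, ∀ T ∈ P, S ≠ T → Disjoint S T) ∧
    (∀ v ∈ G.verts, ∃ S ∈ P, v ∈ S) ∧
    (∀ a b, G.Adj a b → ∀ S ∈ P, a ∈ S → b ∈ S) ∧
    (∀ S ∈ P, ∃ n, 4 ≤ n ∧ Iso (G.induce (· ∈ S)) (cycleGraph n))

/-- Poincaré–Hopf index `i_f(v) = 1 - χ(S^-_f(v))`. -/
noncomputable def pindex (G : FGraph V) (f : V → ℝ) (v : V) : ℤ :=
  1 - ((G.unitSphere v).induce (fun w => f w < f v)).euler

/-- Curvature `K(v) = Σ_{k ≥ 0} (-1)^k f_{k-1}(S(v))/(k+1)` with `f_{-1} = 1`. -/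
noncomputable def curvature (G : FGraph V) (v : V) : ℝ :=
  ∑ k ∈ Finset.range (G.verts.card + 1),
    (-1 : ℝ) ^ k * (if k = 0 then 1 else ((G.unitSphere v).numSimplices k : ℝ)) / (k + 1)

end FGraph

/-- `sign(a + i b) = sign(a) + i sign(b)`. -/
noncomputable def csgn (z : ℂ) : ℂ :=
  ⟨Real.sign z.re, Real.sign z.im⟩

/-- The set `U = {1+i, 1-i, -1+i, -1-i}` of possible values of `csgn`. -/
noncomputable def signU : Finset ℂ :=
  {1 + Complex.I, 1 - Complex.I, -1 + Complex.I, -1 - Complex.I}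

namespace FGraph

variable {V : Type}

/-- The set of values of `sign(ψ - c)` attained on the finite vertex set `x`. -/
noncomputable def signValues (ψ : V → ℂ) (c : ℂ) (x : Finset V) : Finset ℂ :=
  x.image (fun v => csgn (ψ v - c))

/-- The level set `{ψ = c}` of a complex-valued function: the subgraph of the Barycentric
refinement induced by the simplices on which `sign(ψ - c)` takes at least three distinct
values, including `-1+i` and `1-i`. -/
noncomputable def complexLevelSet (G : FGraph V) (ψ : V → ℂ) (c : ℂ) : FGraph (Finset V) :=
  G.barycentric.induce (fun x =>
    3 ≤ (signValues ψ c x).card ∧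
    (-1 + Complex.I) ∈ signValues ψ c x ∧ (1 - Complex.I) ∈ signValues ψ c x)

/-- The level set `{ψ = 0}_e` for a two-element subset `e ⊆ U`: the subgraph of the
Barycentric refinement induced by the simplices on which `sign(ψ)` attains both values
of `e` and at least three distinct values in total. -/
noncomputable def complexLevelSetE (G : FGraph V) (ψ : V → ℂ) (e : Finset ℂ) :
    FGraph (Finset V) :=
  G.barycentric.induce (fun x =>
    (∀ u ∈ e, u ∈ signValues ψ 0 x) ∧ 3 ≤ (signValues ψ 0 x).card)

/-- `Ψ^{-1}(t)`: the subgraph of the Barycentric refinement induced by the simplices on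
which `sign(ψ)` attains all values of `t`. -/
noncomputable def signPreimage (G : FGraph V) (ψ : V → ℂ) (t : Finset ℂ) :
    FGraph (Finset V) :=
  G.barycentric.induce (fun x => ∀ u ∈ t, u ∈ signValues ψ 0 x)

/-- The sign vectors of `F - c` attained on the finite vertex set `x`. -/
noncomputable def vecSignValues {k : ℕ} (F : V → Fin k → ℝ) (c : Fin k → ℝ)
    (x : Finset V) : Finset (Fin k → ℝ) :=
  x.image (fun v j => Real.sign (F v j - c j))

/-- The level set `{F = c}` of an `ℝ^k`-valued function: the subgraph of the Barycentric
refinement induced by the simplices on which the sign vector of `F - c` takes at least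
`k+1` distinct values, including the `k` vectors `(1,…,1,-1,1,…,1)`. -/
noncomputable def vecLevelSet (G : FGraph V) {k : ℕ} (F : V → Fin k → ℝ) (c : Fin k → ℝ) :
    FGraph (Finset V) :=
  G.barycentric.induce (fun x =>
    k + 1 ≤ (vecSignValues F c x).card ∧
    ∀ j : Fin k, (fun i => if i = j then (-1 : ℝ) else 1) ∈ vecSignValues F c x)

end FGraph

/-- The complete graph on `Fin n`. -/
def completeFGraph (n : ℕ) : FGraph (Fin n) where
  verts := Finset.univ
  Adj a b := a ≠ b
  symm h := h.symm
  loopless a h := h rfl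
  mem_of_adj _ := Finset.mem_univ _

/-- Stirling numbers of the second kind. -/
def stirling2 : ℕ → ℕ → ℕ
  | 0, 0 => 1
  | 0, _ + 1 => 0
  | _ + 1, 0 => 0
  | n + 1, m + 1 => (m + 1) * stirling2 n (m + 1) + stirling2 n m

namespace FGraph
variable {V : Type}
open Polynomial

noncomputable def simps (G : FGraph V) : Finset (Finset V) :=
  G.verts.powerset.filter (fun x => G.IsSimplex x)

lemma mem_simps {G : FGraph V} {x : Finset V} : x ∈ simps G ↔ G.IsSimplex x := by
  simp only [simps, Finset.mem_filter, Finset.mem_powerset, and_iff_right_iff_imp]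
  intro h
  exact fun a ha => h.2.1 ha

lemma simplex_card_pos {G : FGraph V} {x : Finset V} (h : x ∈ simps G) : 1 ≤ x.card :=
  Finset.card_pos.mpr (mem_simps.mp h).1

noncomputable def gpoly (G : FGraph V) : Polynomial ℝ :=
  1 + ∑ x ∈ simps G, X ^ x.card

lemma gpoly_coeff_zero (G : FGraph V) : (gpoly G).coeff 0 = 1 := by
  simp only [gpoly, coeff_add, coeff_one, finset_sum_coeff, coeff_X_pow]
  rw [Finset.sum_eq_zero, add_zero]; · simp
  intro x hx
  have := simplex_card_pos hx
  simp; omega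

lemma gpoly_eval_zero (G : FGraph V) : (gpoly G).eval 0 = 1 := by
  rw [← gpoly_coeff_zero G, coeff_zero_eq_eval_zero]


lemma gpoly_coeff_succ (G : FGraph V) (k : ℕ) (hk : k ≠ 0) :
    (gpoly G).coeff k = (G.numSimplices k : ℝ) := by
  simp only [gpoly, coeff_add, coeff_one, finset_sum_coeff, coeff_X_pow]
  rw [if_neg hk, zero_add, Finset.sum_boole]
  have : (simps G).filter (fun x => k = x.card)
      = G.verts.powerset.filter (fun x => G.IsSimplex x ∧ x.card = k) := by
    ext x
    simp only [simps, Finset.mem_filter, Finset.mem_powerset]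
    tauto
  rw [this, numSimplices]

lemma mem_induce_verts {G : FGraph V} {P : V → Prop} {a : V} :
    a ∈ (G.induce P).verts ↔ a ∈ G.verts ∧ P a := by
  simp [induce]

lemma mem_simps_erase {G : FGraph V} {v : V} {x : Finset V} :
    x ∈ simps (G.erase v) ↔ x ∈ simps G ∧ v ∉ x := by
  simp only [mem_simps, IsSimplex, erase]
  constructor
  · rintro ⟨hne, hsub, hadj⟩
    refine ⟨⟨hne, fun a ha => (mem_induce_verts.mp (hsub ha)).1,
      fun a ha b hb hab => (hadj a ha b hb hab).1⟩, fun hv => ?_⟩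
    exact (mem_induce_verts.mp (hsub (by exact_mod_cast hv))).2 rfl
  · rintro ⟨⟨hne, hsub, hadj⟩, hv⟩
    refine ⟨hne, fun a ha => mem_induce_verts.mpr
      ⟨hsub ha, fun h => hv (h ▸ (by exact_mod_cast ha))⟩,
      fun a ha b hb hab => ⟨hadj a ha b hb hab, fun h => hv (h ▸ ha), fun h => hv (h ▸ hb)⟩⟩

lemma mem_simps_unitSphere {G : FGraph V} {v : V} {y : Finset V} :
    y ∈ simps (G.unitSphere v) ↔ y ∈ simps G ∧ ∀ a ∈ y, G.Adj v a := by
  simp only [mem_simps, IsSimplex, unitSphere]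
  constructor
  · rintro ⟨hne, hsub, hadj⟩
    exact ⟨⟨hne, fun a ha => (mem_induce_verts.mp (hsub ha)).1,
      fun a ha b hb hab => (hadj a ha b hb hab).1⟩,
      fun a ha => (mem_induce_verts.mp (hsub (by exact_mod_cast ha))).2⟩
  · rintro ⟨⟨hne, hsub, hadj⟩, hv⟩
    exact ⟨hne, fun a ha => mem_induce_verts.mpr ⟨hsub ha, hv a (by exact_mod_cast ha)⟩,
      fun a ha b hb hab => ⟨hadj a ha b hb hab, hv a ha, hv b hb⟩⟩

lemma empty_notMem_simps {G : FGraph V} : ∅ ∉ simps G := by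
  intro h
  exact (mem_simps.mp h).1.ne_empty rfl

/-- key bijection: simplices containing `v` correspond to `∅` plus simplices of `S(v)`. -/
lemma sum_simps_mem {M : Type*} [AddCommMonoid M] {G : FGraph V} {v : V} (hv : v ∈ G.verts)
    (F : ℕ → M) :
    ∑ x ∈ (simps G).filter (fun x => v ∈ x), F x.card
      = F 1 + ∑ y ∈ simps (G.unitSphere v), F (y.card + 1) := by
  have hemp : (∅ : Finset V) ∉ simps (G.unitSphere v) := empty_notMem_simps
  have key : ∑ x ∈ (simps G).filter (fun x => v ∈ x), F x.card
      = ∑ y ∈ insert ∅ (simps (G.unitSphere v)), F (y.card + 1) := by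
    refine Finset.sum_nbij' (fun x => x.erase v) (fun y => insert v y) ?_ ?_ ?_ ?_ ?_
    · intro x hx
      simp only [Finset.mem_filter] at hx
      obtain ⟨hxs, hvx⟩ := hx
      rcases eq_or_ne x {v} with rfl | hne
      · simp
      · have hs := mem_simps.mp hxs
        refine Finset.mem_insert.mpr (Or.inr (mem_simps_unitSphere.mpr ⟨mem_simps.mpr
          ⟨?_, ?_, ?_⟩, ?_⟩))
        · rw [Finset.erase_nonempty hvx]
          exact (Finset.nontrivial_iff_ne_singleton hvx).mpr hne
        · intro a ha
          exact hs.2.1 (Finset.mem_coe.mpr (Finset.mem_of_mem_erase (Finset.mem_coe.mp ha)))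
        · intro a ha b hb hab
          exact hs.2.2 a (Finset.mem_of_mem_erase ha) b (Finset.mem_of_mem_erase hb) hab
        · intro a ha
          exact hs.2.2 v hvx a (Finset.mem_of_mem_erase ha) (Finset.ne_of_mem_erase ha).symm
    · intro y hy
      rcases Finset.mem_insert.mp hy with rfl | hy
      · refine Finset.mem_filter.mpr ⟨mem_simps.mpr ⟨?_, ?_, ?_⟩, ?_⟩ <;>
          simp [hv]
      · obtain ⟨hys, hadj⟩ := mem_simps_unitSphere.mp hy
        have hs := mem_simps.mp hys
        refine Finset.mem_filter.mpr ⟨mem_simps.mpr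
          ⟨⟨v, Finset.mem_insert_self v y⟩, ?_, ?_⟩, Finset.mem_insert_self v y⟩
        · intro a ha
          rcases Finset.mem_insert.mp (by exact_mod_cast ha) with rfl | ha'
          · exact hv
          · exact hs.2.1 ha'
        · intro a ha b hb hab
          rcases Finset.mem_insert.mp ha with rfl | ha' <;>
            rcases Finset.mem_insert.mp hb with rfl | hb'
          · exact absurd rfl hab
          · exact hadj b hb'
          · exact G.symm (hadj a ha')
          · exact hs.2.2 a ha' b hb' hab
    · intro x hx
      exact Finset.insert_erase (Finset.mem_filter.mp hx).2
    · intro y hy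
      have hvy : v ∉ y := by
        rcases Finset.mem_insert.mp hy with rfl | hy
        · simp
        · exact fun hvy => G.loopless v ((mem_simps_unitSphere.mp hy).2 v hvy)
      exact Finset.erase_insert hvy
    · intro x hx
      obtain ⟨hxs, hvx⟩ := Finset.mem_filter.mp hx
      rw [Finset.card_erase_of_mem hvx]
      congr 1
      have := simplex_card_pos hxs
      omega
  rw [key, Finset.sum_insert hemp, Finset.card_empty]

lemma gpoly_cone {G : FGraph V} {v : V} (hv : v ∈ G.verts) :
    gpoly G = gpoly (G.erase v) + X * gpoly (G.unitSphere v) := by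
  have hsplit : ∑ x ∈ simps G, (X : Polynomial ℝ) ^ x.card
      = ∑ x ∈ (simps G).filter (fun x => ¬ v ∈ x), (X : Polynomial ℝ) ^ x.card
        + ∑ x ∈ (simps G).filter (fun x => v ∈ x), (X : Polynomial ℝ) ^ x.card := by
    rw [add_comm, Finset.sum_filter_add_sum_filter_not]
  have herase : simps (G.erase v) = (simps G).filter (fun x => ¬ v ∈ x) := by
    ext x
    simp [mem_simps_erase]
  have hbij := sum_simps_mem hv (fun k => (X : Polynomial ℝ) ^ k)
  rw [gpoly, gpoly, gpoly, herase, hsplit, hbij]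
  rw [mul_add, mul_one, Finset.mul_sum]
  have hm : ∀ y ∈ simps (G.unitSphere v), (X : Polynomial ℝ) * X ^ y.card = X ^ (y.card + 1) :=
    fun y _ => by rw [pow_succ, mul_comm]
  rw [Finset.sum_congr rfl hm, pow_one]
  ring

lemma gpoly_derivative (G : FGraph V) :
    derivative (gpoly G) = ∑ v ∈ G.verts, gpoly (G.unitSphere v) := by
  have h1 : derivative (gpoly G)
      = ∑ x ∈ simps G, (x.card : Polynomial ℝ) * X ^ (x.card - 1) := by
    simp only [gpoly, derivative_add, derivative_one, zero_add, map_sum, derivative_X_pow]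
    simp [Polynomial.C_eq_natCast]
  have h2 : ∀ x ∈ simps G, (x.card : Polynomial ℝ) * X ^ (x.card - 1)
      = ∑ w ∈ x, (X : Polynomial ℝ) ^ (x.card - 1) := by
    intro x _
    rw [Finset.sum_const, nsmul_eq_mul]
  rw [h1, Finset.sum_congr rfl h2]
  have h3 : ∀ x ∈ simps G, ∑ w ∈ x, (X : Polynomial ℝ) ^ (x.card - 1)
      = ∑ w ∈ G.verts, if w ∈ x then (X : Polynomial ℝ) ^ (x.card - 1) else 0 := by
    intro x hx
    rw [Finset.sum_ite_mem, Finset.inter_eq_right.mpr]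
    intro a ha
    exact (mem_simps.mp hx).2.1 (by exact_mod_cast ha)
  rw [Finset.sum_congr rfl h3, Finset.sum_comm]
  refine Finset.sum_congr rfl fun v hv => ?_
  rw [← Finset.sum_filter]
  have := sum_simps_mem hv (fun k => (X : Polynomial ℝ) ^ (k - 1))
  simp only [this]
  simp [gpoly]

lemma simps_eq_empty {G : FGraph V} (h : G.verts = ∅) : simps G = ∅ := by
  ext x
  simp only [mem_simps, Finset.notMem_empty, iff_false]
  rintro ⟨hne, hsub, -⟩
  obtain ⟨a, ha⟩ := hne
  have := hsub (by exact_mod_cast ha)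
  rw [h] at this
  simpa using this

lemma unitSphere_card_le {G : FGraph V} {v : V} (hv : v ∈ G.verts) :
    (G.unitSphere v).verts.card + 1 ≤ G.verts.card := by
  have hsub : (G.unitSphere v).verts ⊆ G.verts.erase v := by
    intro a ha
    obtain ⟨ha1, ha2⟩ := mem_induce_verts.mp ha
    refine Finset.mem_erase.mpr ⟨fun h => G.loopless v (h ▸ ha2), ha1⟩
  have := Finset.card_le_card hsub
  rw [Finset.card_erase_of_mem hv] at this
  have hpos : 0 < G.verts.card := Finset.card_pos.mpr ⟨v, hv⟩
  omega

lemma contractible_eval {G : FGraph V} (h : Contractible G) : (gpoly G).eval (-1) = 0 := by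
  induction h with
  | single G v h =>
    have hs : simps G = {{v}} := by
      ext x
      simp only [mem_simps, Finset.mem_singleton, IsSimplex]
      constructor
      · rintro ⟨hne, hsub, -⟩
        rw [h] at hsub
        have hx : x ⊆ {v} := by
          intro a ha
          exact_mod_cast hsub (by exact_mod_cast ha)
        rcases Finset.subset_singleton_iff.mp hx with rfl | rfl
        · exact absurd rfl hne.ne_empty
        · rfl
      · rintro rfl
        exact ⟨Finset.singleton_nonempty v, by rw [h], by simp⟩
    simp [gpoly, hs]
  | step G v hv h1 h2 ih1 ih2 =>
    rw [gpoly_cone hv]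
    simp [ih1, ih2]

lemma neg_one_zpow_mul_self (m : ℤ) : ((-1:ℝ) ^ m) * ((-1:ℝ) ^ m) = 1 := by
  rw [← zpow_add₀ (by norm_num : (-1:ℝ) ≠ 0), show m + m = 2 * m by ring, zpow_mul]
  norm_num

lemma sphere_eval : ∀ (n : ℕ) (G : FGraph V), G.verts.card ≤ n → ∀ d : ℤ, IsSphere d G →
    (gpoly G).eval (-1) = (-1 : ℝ) ^ (d + 1) := by
  intro n
  induction n with
  | zero =>
    intro G hcard d hS
    cases hS with
    | empty G h => simp [gpoly, simps_eq_empty h]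
    | punctured d G hm v hv hc =>
      have := Finset.card_pos.mpr ⟨v, hv⟩
      omega
  | succ n ih =>
    intro G hcard d hS
    cases hS with
    | empty G h => simp [gpoly, simps_eq_empty h]
    | punctured d G hm v hv hc =>
      obtain ⟨d, hd0, G, h⟩ := hm
      have hSv := h v hv
      have hcS : (G.unitSphere v).verts.card ≤ n := by
        have := unitSphere_card_le hv
        omega
      have e1 := contractible_eval hc
      have e2 := ih (G.unitSphere v) hcS (d - 1) hSv
      rw [gpoly_cone hv]
      simp only [eval_add, eval_mul, eval_X, e1, e2, zero_add]
      rw [show d - 1 + 1 = d by ring, show d + 1 = 1 + d by ring,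
        zpow_add₀ (by norm_num : (-1:ℝ) ≠ 0), zpow_one]

lemma sphere_feq : ∀ (n : ℕ) (G : FGraph V), G.verts.card ≤ n → ∀ d : ℤ, IsSphere d G →
    (gpoly G).comp (Polynomial.C (-1) - X) = Polynomial.C ((-1:ℝ) ^ (d + 1)) * gpoly G := by
  intro n
  induction n with
  | zero =>
    intro G hcard d hS
    cases hS with
    | empty G h => simp [gpoly, simps_eq_empty h]
    | punctured d G hm v hv hc =>
      have := Finset.card_pos.mpr ⟨v, hv⟩
      omega
  | succ n ih =>
    intro G hcard d hS
    cases hS with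
    | empty G h => simp [gpoly, simps_eq_empty h]
    | punctured d G hm v hv hc =>
      obtain ⟨d, hd0, G, h⟩ := hm
      set p := (gpoly G).comp (Polynomial.C (-1) - X)
        - Polynomial.C ((-1:ℝ) ^ (d + 1)) * gpoly G with hp
      have hderiv : derivative p = 0 := by
        rw [hp, derivative_sub, derivative_comp, derivative_mul, derivative_C, zero_mul,
          zero_add, gpoly_derivative]
        have hq : derivative (Polynomial.C (-1:ℝ) - X) = -1 := by
          simp
        rw [hq, Polynomial.sum_comp]
        have hterm : ∀ v' ∈ G.verts, (gpoly (G.unitSphere v')).comp (Polynomial.C (-1) - X)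
            = Polynomial.C ((-1:ℝ) ^ d) * gpoly (G.unitSphere v') := by
          intro v' hv'
          have hcS : (G.unitSphere v').verts.card ≤ n := by
            have := unitSphere_card_le hv'
            omega
          have := ih (G.unitSphere v') hcS (d - 1) (h v' hv')
          rwa [show d - 1 + 1 = d by ring] at this
        rw [Finset.sum_congr rfl hterm, ← Finset.mul_sum, ← gpoly_derivative]
        rw [show (-1 : Polynomial ℝ) * (Polynomial.C ((-1:ℝ) ^ d) * derivative (gpoly G))
            = Polynomial.C (-((-1:ℝ) ^ d)) * derivative (gpoly G) by
          rw [map_neg]; ring]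
        rw [show -((-1:ℝ) ^ d) = (-1:ℝ) ^ (d + 1) by
          rw [zpow_add₀ (by norm_num : (-1:ℝ) ≠ 0), zpow_one]; ring]
        ring
      have hconst : p = Polynomial.C (p.coeff 0) :=
        eq_C_of_natDegree_eq_zero (natDegree_eq_zero_of_derivative_eq_zero hderiv)
      have heval : p.eval (-1) = 0 := by
        rw [hp]
        simp only [eval_sub, eval_comp, eval_sub, eval_C, eval_X, eval_mul]
        rw [show (-1:ℝ) - (-1) = 0 by ring, gpoly_eval_zero]
        rw [sphere_eval G.verts.card G le_rfl d (IsSphere.punctured d G ⟨d, hd0, G, h⟩ v hv hc)]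
        rw [neg_one_zpow_mul_self]
        ring
      have : p.coeff 0 = 0 := by
        rw [hconst] at heval
        simpa using heval
      have hp0 : p = 0 := by
        rw [hconst, this, map_zero]
      have := sub_eq_zero.mp (hp ▸ hp0)
      exact this

theorem curvature_zero_odd' {V : Type} (G : FGraph V) (d : ℤ) (hd : Odd d)
    (hG : FGraph.IsManifold d G) :
    ∀ v ∈ G.verts, G.curvature v = 0 := by
  intro v hv
  obtain ⟨d, hd0, G, h⟩ := hG
  have hSv := h v hv
  set g := gpoly (G.unitSphere v) with hgdef
  -- Dehn–Sommerville functional equation for the even-dimensional sphere S(v)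
  have hfeq : g.comp (Polynomial.C (-1) - X) = -g := by
    have hf := sphere_feq (G.unitSphere v).verts.card (G.unitSphere v) le_rfl (d - 1) hSv
    rw [show d - 1 + 1 = d by ring, Odd.neg_one_zpow hd] at hf
    rw [← hgdef] at hf
    rw [hf, map_neg, map_one, neg_one_mul]
  set N := G.verts.card with hN
  have hdeg : g.natDegree < N + 1 := by
    have h1 : g.natDegree ≤ N := by
      rw [hgdef, gpoly]
      refine le_trans (natDegree_add_le _ _) ?_
      rw [natDegree_one]
      refine max_le (Nat.zero_le _) (natDegree_sum_le_of_forall_le _ _ fun x hx => ?_)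
      refine le_trans (natDegree_X_pow_le _) ?_
      have hx1 : x ⊆ (G.unitSphere v).verts := by
        intro a ha
        exact_mod_cast (mem_simps.mp hx).2.1 (by exact_mod_cast ha)
      have hx2 : (G.unitSphere v).verts ⊆ G.verts := by
        intro a ha
        exact (mem_induce_verts.mp ha).1
      exact le_trans (Finset.card_le_card hx1) (Finset.card_le_card hx2)
    omega
  -- the formal antiderivative of g
  set A : Polynomial ℝ :=
    ∑ k ∈ Finset.range (N + 1), Polynomial.C (g.coeff k / ((k : ℝ) + 1)) * X ^ (k + 1)
    with hA
  have hAderiv : derivative A = g := by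
    rw [hA, derivative_sum]
    have hterm : ∀ k ∈ Finset.range (N + 1),
        derivative (Polynomial.C (g.coeff k / ((k : ℝ) + 1)) * X ^ (k + 1))
          = (monomial k) (g.coeff k) := by
      intro k _
      rw [derivative_C_mul, derivative_X_pow, ← C_mul_X_pow_eq_monomial]
      rw [← mul_assoc, ← map_mul, show (k + 1 : ℕ) - 1 = k from rfl]
      congr 1
      push_cast
      rw [div_mul_cancel₀]
      positivity
    rw [Finset.sum_congr rfl hterm, ← as_sum_range' g (N + 1) hdeg]
  have hAcomp : derivative (A.comp (Polynomial.C (-1) - X)) = g := by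
    rw [derivative_comp, hAderiv, hfeq]
    have : derivative (Polynomial.C (-1 : ℝ) - X) = -1 := by simp
    rw [this]
    ring
  -- A is symmetric about -1/2
  set D := A - A.comp (Polynomial.C (-1) - X) with hD
  have hDderiv : derivative D = 0 := by
    rw [hD, derivative_sub, hAderiv, hAcomp, sub_self]
  have hDconst : D = Polynomial.C (D.coeff 0) :=
    eq_C_of_natDegree_eq_zero (natDegree_eq_zero_of_derivative_eq_zero hDderiv)
  have hDev : D.eval (-1/2) = 0 := by
    rw [hD]
    simp only [eval_sub, eval_comp, eval_C, eval_X]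
    rw [show (-1 : ℝ) - (-1/2) = -1/2 by ring, sub_self]
  have hD0 : D = 0 := by
    rw [hDconst] at hDev ⊢
    simp only [eval_C] at hDev
    rw [hDev, map_zero]
  have hAeq : A = A.comp (Polynomial.C (-1) - X) := by
    have := sub_eq_zero.mp (hD ▸ hD0)
    exact this
  have hAeval0 : A.eval 0 = 0 := by
    rw [hA]
    simp only [eval_finset_sum, eval_mul, eval_C, eval_pow, eval_X]
    refine Finset.sum_eq_zero fun k _ => ?_
    rw [zero_pow (by omega : k + 1 ≠ 0), mul_zero]
  have hAeval1 : A.eval (-1) = 0 := by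
    conv_lhs => rw [hAeq]
    rw [eval_comp]
    simp only [eval_sub, eval_C, eval_X]
    rw [show (-1 : ℝ) - (-1) = 0 by ring, hAeval0]
  -- curvature equals -A.eval (-1)
  have hcoeff : ∀ k : ℕ, g.coeff k
      = (if k = 0 then (1:ℝ) else ((G.unitSphere v).numSimplices k : ℝ)) := by
    intro k
    rcases eq_or_ne k 0 with rfl | hk
    · simp [hgdef, gpoly_coeff_zero]
    · rw [if_neg hk, hgdef, gpoly_coeff_succ _ _ hk]
  have hcurv : G.curvature v = - A.eval (-1) := by
    rw [curvature, hA]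
    simp only [eval_finset_sum, eval_mul, eval_C, eval_pow, eval_X]
    rw [← Finset.sum_neg_distrib]
    refine Finset.sum_congr rfl fun k hk => ?_
    rw [← hcoeff k, pow_succ]
    ring
  rw [hcurv, hAeval1, neg_zero]

end FGraph

/-- An odd-dimensional manifold has constant zero curvature. -/
theorem curvature_zero_odd {V : Type} (G : FGraph V) (d : ℤ) (hd : Odd d)
    (hG : FGraph.IsManifold d G) :
    ∀ v ∈ G.verts, G.curvature v = 0 :=
  FGraph.curvature_zero_odd' G d hd hG
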